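/- Let ν be a finite Borel measure on ℝ with compact support not containing 0, φ Schwartz with φ(y)=1/y on supp(ν), and g(x) = (1+x)^{−1/2} + sup{|ν̂(tx)|:|t|≥1}. For a ≥ 1, b ≥ 0, N ≥ 1 and ξ ∈ ℝ, define J = ∫_ℝ ∫_0^1 e^{−2πi(ξ/N)(aN + bN + x)y} dx dν(y). Then there is a constant C₀ (depending only on ν and φ) with |J| ≤ C₀ g(|ξ|/2) min{1, N/|ξ|}. -/

import Mathlib

/-!
By Fubini, `J = ∫₀¹ ν̂(ξ/N · (aN + bN + x)) dx`, and every frequency occurring there has modulus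
at least `|ξ|`; since `g` is antitone on `[0, ∞)` this gives `|J| ≤ g(|ξ|/2)`.
For `ξ ≠ 0`, integrating in `x` first and using `φ(y) = 1/y` on the support of `ν` writes `J` as
`N/(-2πiξ)` times a difference of two values of `(φν)^` at frequencies of modulus `≥ |ξ|`.
Writing `φ = 𝓕ψ` with `ψ` Schwartz, `(φν)^(s) = ∫ ψ(v) ν̂(s + v) dv`. Where `|v| ≤ |s|/2` the
factor `ν̂(s + v)` is at most `g(|s|/2)`; elsewhere `ν̂` is at most `ν(ℝ)`, and the weight
`1 + |v|`, integrable against `ψ`, dominates `(1 + |s|/2)^{1/2}`. Hence `|(φν)^(s)| ≲ g(|s|/2)`.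
-/

open MeasureTheory

/-- Fourier transform of a measure on `ℝ`. -/
noncomputable def ft1 (μ : Measure ℝ) (ξ : ℝ) : ℂ :=
  ∫ x, Complex.exp (((-2 * Real.pi * x * ξ : ℝ) : ℂ) * Complex.I) ∂μ

/-- The auxiliary majorant `g(x) = (1+x)^{-1/2} + sup{|ν̂(tx)| : |t| ≥ 1}`. -/
noncomputable def gfun (ν : Measure ℝ) (x : ℝ) : ℝ :=
  (1 + x) ^ (-(1 / 2 : ℝ)) + sSup {r : ℝ | ∃ t : ℝ, 1 ≤ |t| ∧ r = ‖ft1 ν (t * x)‖}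

open Real Set Filter FourierTransform

noncomputable def ftTailSup (ν : Measure ℝ) (x : ℝ) : ℝ :=
  sSup {r : ℝ | ∃ t : ℝ, 1 ≤ |t| ∧ r = ‖ft1 ν (t * x)‖}

lemma gfun_eq (ν : Measure ℝ) (x : ℝ) :
    gfun ν x = (1 + x) ^ (-(1 / 2 : ℝ)) + ftTailSup ν x := rfl

lemma norm_ft1_zero (ν : Measure ℝ) : ‖ft1 ν 0‖ = ν.real univ := by
  simp [ft1]

-- The `J` of the statement is `jIntegral ν (ξ / N) (a * N + b * N)`.
noncomputable def jIntegral (ν : Measure ℝ) (d A : ℝ) : ℂ :=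
  ∫ y, (∫ x in (0 : ℝ)..1, Complex.exp (((-2 * π * d * (A + x) * y : ℝ) : ℂ) * Complex.I)) ∂ν

-- The Fourier transform `(φν)^` of the measure with density `φ` against `ν`.
noncomputable def ft1Weighted (φ : ℝ → ℂ) (ν : Measure ℝ) (s : ℝ) : ℂ :=
  ∫ y, φ y * Complex.exp (((-2 * π * y * s : ℝ) : ℂ) * Complex.I) ∂ν

lemma intervalIntegral_cexp_eq {d y : ℝ} (hd : d ≠ 0) (hy : y ≠ 0) (A : ℝ) :
    ∫ x in (0 : ℝ)..1, Complex.exp (((-2 * π * d * (A + x) * y : ℝ) : ℂ) * Complex.I) =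
      (Complex.exp (((-2 * π * y * (d * (A + 1)) : ℝ) : ℂ) * Complex.I) -
        Complex.exp (((-2 * π * y * (d * A) : ℝ) : ℂ) * Complex.I)) /
        (((-2 * π * d * y : ℝ) : ℂ) * Complex.I) := by
  set c : ℂ := ((-2 * π * d * y : ℝ) : ℂ) * Complex.I
  have hc : c ≠ 0 := mul_ne_zero (by simp [hd, hy, pi_ne_zero]) Complex.I_ne_zero
  have hphase : ∀ x : ℝ, (((-2 * π * d * (A + x) * y : ℝ) : ℂ) * Complex.I) = c * A + c * x := by
    intro x; simp only [c]; push_cast; ring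
  simp_rw [hphase, Complex.exp_add, intervalIntegral.integral_const_mul,
    integral_exp_mul_complex hc]
  rw [mul_div_assoc', mul_sub, ← Complex.exp_add, ← Complex.exp_add]
  congr 3 <;> · simp only [c]; push_cast; ring

lemma integrable_mul_cexp {ν : Measure ℝ} {φ : ℝ → ℂ} (hφ : Integrable φ ν) (s : ℝ) :
    Integrable (fun y => φ y * Complex.exp (((-2 * π * y * s : ℝ) : ℂ) * Complex.I)) ν :=
  hφ.mul_bdd (c := 1) (Continuous.aestronglyMeasurable (by fun_prop))
    (Eventually.of_forall fun _ => (Complex.norm_exp_ofReal_mul_I _).le)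

lemma jIntegral_eq_sub {ν : Measure ℝ} {K : Set ℝ} (hK0 : (0 : ℝ) ∉ K) (hνK : ν Kᶜ = 0) {φ : ℝ → ℂ}
    (hφi : Integrable φ ν) (hφ : ∀ y ∈ K, φ y = 1 / (y : ℂ)) {d : ℝ} (hd : d ≠ 0) (A : ℝ) :
    jIntegral ν d A = (ft1Weighted φ ν (d * (A + 1)) - ft1Weighted φ ν (d * A)) /
      (((-2 * π * d : ℝ) : ℂ) * Complex.I) := by
  rw [ft1Weighted, ft1Weighted, ← integral_sub (integrable_mul_cexp hφi _)
    (integrable_mul_cexp hφi _), ← integral_div, jIntegral]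
  refine integral_congr_ae ((ae_iff.2 hνK : ∀ᵐ y ∂ν, y ∈ K).mono fun y hy => ?_)
  have hy0 : y ≠ 0 := fun h => hK0 (h ▸ hy)
  dsimp only
  rw [intervalIntegral_cexp_eq hd hy0, hφ y hy]
  have hd' : (d : ℂ) ≠ 0 := by exact_mod_cast hd
  have hy' : (y : ℂ) ≠ 0 := by exact_mod_cast hy0
  push_cast
  field_simp

section FiniteMeasure

variable {ν : Measure ℝ} [IsFiniteMeasure ν]

lemma norm_ft1_le (s : ℝ) : ‖ft1 ν s‖ ≤ ν.real univ :=
  (norm_integral_le_of_norm_le_const (C := 1)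
    (Eventually.of_forall fun _ => (Complex.norm_exp_ofReal_mul_I _).le)).trans_eq (one_mul _)

lemma norm_ft1_le_ftTailSup {t : ℝ} (ht : 1 ≤ |t|) (x : ℝ) :
    ‖ft1 ν (t * x)‖ ≤ ftTailSup ν x :=
  le_csSup ⟨ν.real univ, by rintro _ ⟨t, -, rfl⟩; exact norm_ft1_le _⟩ ⟨t, ht, rfl⟩

lemma ftTailSup_nonneg (x : ℝ) : 0 ≤ ftTailSup ν x :=
  (norm_nonneg _).trans (norm_ft1_le_ftTailSup (t := 1) (by simp) x)

lemma ftTailSup_antitoneOn : AntitoneOn (ftTailSup ν) (Ici 0) := by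
  intro x hx y hy hxy
  refine csSup_le ⟨_, 1, by simp, rfl⟩ ?_
  rintro _ ⟨t, ht, rfl⟩
  rcases (mem_Ici.1 hx).eq_or_lt with rfl | hx0
  · -- At `x = 0` the supremum is `‖ν̂ 0‖ = ν(ℝ)`, the largest value of `‖ν̂‖`.
    calc ‖ft1 ν (t * y)‖ ≤ ‖ft1 ν (1 * 0)‖ := by
          rw [one_mul, norm_ft1_zero ν]; exact norm_ft1_le _
      _ ≤ ftTailSup ν 0 := norm_ft1_le_ftTailSup (by simp) 0
  · rw [show t * y = (t * y / x) * x by field_simp]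
    apply norm_ft1_le_ftTailSup
    rw [abs_div, abs_mul, abs_of_pos hx0, abs_of_nonneg (mem_Ici.1 hy), le_div_iff₀ hx0]
    nlinarith

lemma gfun_antitoneOn : AntitoneOn (gfun ν) (Ici 0) := fun x hx y hy hxy => by
  rw [gfun_eq, gfun_eq]
  exact add_le_add (rpow_le_rpow_of_nonpos (by linarith [mem_Ici.1 hx]) (by linarith) (by norm_num))
    (ftTailSup_antitoneOn hx hy hxy)

lemma gfun_le_gfun {x y : ℝ} (hx : 0 ≤ x) (hxy : x ≤ y) : gfun ν y ≤ gfun ν x :=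
  gfun_antitoneOn hx (mem_Ici.2 (hx.trans hxy)) hxy

lemma norm_ft1_le_gfun_abs (s : ℝ) : ‖ft1 ν s‖ ≤ gfun ν |s| := by
  have h : ‖ft1 ν s‖ ≤ ftTailSup ν |s| := by
    rcases le_total 0 s with hs | hs
    · simpa [abs_of_nonneg hs] using norm_ft1_le_ftTailSup (ν := ν) (t := 1) (by simp) |s|
    · simpa [abs_of_nonpos hs] using norm_ft1_le_ftTailSup (ν := ν) (t := -1) (by simp) |s|
  rw [gfun_eq]
  linarith [rpow_nonneg (by positivity : (0 : ℝ) ≤ 1 + |s|) (-(1 / 2 : ℝ))]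

lemma norm_ft1_le_gfun {x s : ℝ} (hx : 0 ≤ x) (h : x ≤ |s|) : ‖ft1 ν s‖ ≤ gfun ν x :=
  (norm_ft1_le_gfun_abs s).trans (gfun_le_gfun hx h)

lemma gfun_nonneg {x : ℝ} (hx : 0 ≤ x) : 0 ≤ gfun ν x :=
  (norm_nonneg _).trans (norm_ft1_le_gfun hx (le_abs_self x))

lemma rpow_le_gfun (x : ℝ) : (1 + x) ^ (-(1 / 2 : ℝ)) ≤ gfun ν x :=
  le_add_of_nonneg_right (ftTailSup_nonneg x)

lemma integral_integral_mul_cexp {μ : Measure ℝ} [SFinite μ] {f : ℝ → ℂ} (hf : Integrable f μ)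
    {θ : ℝ → ℝ} (hθ : Continuous θ) :
    ∫ y, (∫ u, f u * Complex.exp (((-2 * π * y * θ u : ℝ) : ℂ) * Complex.I) ∂μ) ∂ν =
      ∫ u, f u * ft1 ν (θ u) ∂μ := by
  rw [integral_integral_swap]
  · simp only [ft1, integral_const_mul]
  · have h := ((integrable_const (1 : ℂ) (μ := ν)).mul_prod hf).mul_bdd (c := 1)
      (g := fun z : ℝ × ℝ => Complex.exp (((-2 * π * z.1 * θ z.2 : ℝ) : ℂ) * Complex.I))
      (Continuous.aestronglyMeasurable (by fun_prop))
      (Eventually.of_forall fun _ => (Complex.norm_exp_ofReal_mul_I _).le)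
    simpa only [one_mul, Function.uncurry_def] using h

lemma jIntegral_eq_setIntegral_ft1 (d A : ℝ) :
    jIntegral ν d A = ∫ x in Ioc 0 1, ft1 ν (d * (A + x)) := by
  have h := integral_integral_mul_cexp (ν := ν) (μ := volume.restrict (Ioc 0 1))
    (integrable_const 1) (θ := fun x => d * (A + x)) (by fun_prop)
  simp only [one_mul] at h
  rw [← h, jIntegral]
  congr! 2 with y
  rw [intervalIntegral.integral_of_le zero_le_one]
  congr! 5 with x
  ring

lemma norm_jIntegral_le {d A x₀ : ℝ} (hA : 0 ≤ A) (hx₀ : 0 ≤ x₀) (h : x₀ ≤ |d| * A) :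
    ‖jIntegral ν d A‖ ≤ gfun ν x₀ := by
  rw [jIntegral_eq_setIntegral_ft1]
  refine (norm_setIntegral_le_of_norm_le_const (by simp) fun x hx =>
    norm_ft1_le_gfun hx₀ ?_).trans_eq (by simp)
  rw [abs_mul, abs_of_pos (by linarith [hx.1] : 0 < A + x)]
  nlinarith [abs_nonneg d, hx.1]

lemma ft1Weighted_fourier {ψ : ℝ → ℂ} (hψ : Integrable ψ) (s : ℝ) :
    ft1Weighted (𝓕 ψ) ν s = ∫ v, ψ v * ft1 ν (s + v) := by
  rw [← integral_integral_mul_cexp hψ (by fun_prop), ft1Weighted]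
  refine integral_congr_ae (Eventually.of_forall fun y => ?_)
  dsimp only
  rw [Real.fourier_real_eq_integral_exp_smul, ← integral_mul_const]
  congr 1 with v
  rw [smul_eq_mul, mul_right_comm, mul_comm, ← Complex.exp_add]
  congr 2
  push_cast
  ring

lemma norm_ft1_add_le (s v : ℝ) :
    ‖ft1 ν (s + v)‖ ≤ (1 + ν.real univ * (1 + |v|)) * gfun ν (|s| / 2) := by
  have hg : 0 ≤ gfun ν (|s| / 2) := gfun_nonneg (by positivity)
  have hM : 0 ≤ ν.real univ * (1 + |v|) := by positivity
  rcases le_or_gt |v| (|s| / 2) with hv | hv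
  · calc ‖ft1 ν (s + v)‖ ≤ gfun ν (|s| / 2) :=
          norm_ft1_le_gfun (by positivity) (by linarith [abs_sub_abs_le_abs_add s v])
      _ ≤ _ := le_mul_of_one_le_left hg (by linarith)
  · have hw : 1 ≤ (1 + |v|) * (1 + |s| / 2) ^ (-(1 / 2 : ℝ)) := by
      have h1 : (1 + |s| / 2) ^ (-1 : ℝ) ≤ (1 + |s| / 2) ^ (-(1 / 2 : ℝ)) :=
        rpow_le_rpow_of_exponent_le (by linarith [abs_nonneg s]) (by norm_num)
      rw [rpow_neg_one] at h1
      calc (1 : ℝ) ≤ (1 + |v|) * (1 + |s| / 2)⁻¹ := by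
            rw [← div_eq_mul_inv, le_div_iff₀ (by positivity)]; linarith
        _ ≤ _ := by gcongr
    calc ‖ft1 ν (s + v)‖ ≤ ν.real univ * 1 := (norm_ft1_le _).trans_eq (mul_one _).symm
      _ ≤ ν.real univ * ((1 + |v|) * gfun ν (|s| / 2)) := by
          gcongr; exact hw.trans (by gcongr; exact rpow_le_gfun _)
      _ ≤ _ := by nlinarith

lemma norm_integral_mul_ft1_le {ψ : ℝ → ℂ} (hψ : Integrable ψ)
    (hψ₁ : Integrable fun v => |v| * ‖ψ v‖) (s : ℝ) :
    ‖∫ v, ψ v * ft1 ν (s + v)‖ ≤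
      (∫ v, (1 + ν.real univ * (1 + |v|)) * ‖ψ v‖) * gfun ν (|s| / 2) := by
  have hint : Integrable fun v => (1 + ν.real univ * (1 + |v|)) * ‖ψ v‖ :=
    ((hψ.norm.const_mul (1 + ν.real univ)).add (hψ₁.const_mul (ν.real univ))).congr
      (Eventually.of_forall fun v => by simp only [Pi.add_apply]; ring)
  rw [← integral_mul_const]
  refine norm_integral_le_of_norm_le (hint.mul_const _) (Eventually.of_forall fun v => ?_)
  rw [norm_mul, mul_right_comm, mul_comm]
  exact mul_le_mul_of_nonneg_right (norm_ft1_add_le s v) (norm_nonneg _)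

lemma exists_norm_ft1Weighted_le (φ : SchwartzMap ℝ ℂ) :
    ∃ C, 0 ≤ C ∧ ∀ s, ‖ft1Weighted φ ν s‖ ≤ C * gfun ν (|s| / 2) := by
  set ψ : SchwartzMap ℝ ℂ := 𝓕⁻ φ
  have hφ : (φ : ℝ → ℂ) = 𝓕 (ψ : ℝ → ℂ) := by
    rw [← SchwartzMap.fourier_coe, fourier_fourierInv_eq]
  refine ⟨∫ v, (1 + ν.real univ * (1 + |v|)) * ‖ψ v‖, integral_nonneg fun v => by positivity,
    fun s => ?_⟩
  rw [hφ, ft1Weighted_fourier ψ.integrable]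
  exact norm_integral_mul_ft1_le ψ.integrable (by simpa using ψ.integrable_pow_mul volume 1) s

lemma norm_jIntegral_le_of_ne_zero {K : Set ℝ} (hK0 : (0 : ℝ) ∉ K)
    (hνK : ν Kᶜ = 0) {φ : ℝ → ℂ} (hφi : Integrable φ ν) (hφ : ∀ y ∈ K, φ y = 1 / (y : ℂ))
    {C : ℝ} (hC : 0 ≤ C) (hF : ∀ s, ‖ft1Weighted φ ν s‖ ≤ C * gfun ν (|s| / 2))
    {d A x₀ : ℝ} (hd : d ≠ 0) (hA : 0 ≤ A) (hx₀ : 0 ≤ x₀) (h : x₀ ≤ |d| * A) :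
    ‖jIntegral ν d A‖ ≤ C * gfun ν (x₀ / 2) / (π * |d|) := by
  have hF' : ∀ x, 0 ≤ x → ‖ft1Weighted φ ν (d * (A + x))‖ ≤ C * gfun ν (x₀ / 2) := by
    intro x hx
    refine (hF _).trans (mul_le_mul_of_nonneg_left (gfun_le_gfun (by positivity) ?_) hC)
    rw [abs_mul, abs_of_nonneg (by positivity : 0 ≤ A + x)]
    nlinarith [abs_nonneg d]
  have hden : ‖(((-2 * π * d : ℝ) : ℂ) * Complex.I)‖ = 2 * (π * |d|) := by
    rw [norm_mul, Complex.norm_I, mul_one, Complex.norm_real, Real.norm_eq_abs, abs_mul, abs_mul,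
      abs_of_pos pi_pos]
    norm_num
    ring
  rw [jIntegral_eq_sub hK0 hνK hφi hφ hd, norm_div, hden]
  calc _ ≤ (C * gfun ν (x₀ / 2) + C * gfun ν (x₀ / 2)) / (2 * (π * |d|)) := by
        gcongr
        exact (norm_sub_le _ _).trans
          (add_le_add (hF' 1 zero_le_one) (by simpa using hF' 0 le_rfl))
    _ = _ := by ring

end FiniteMeasure

theorem stmt17_general (ν : Measure ℝ) [IsFiniteMeasure ν]
    (K : Set ℝ) (hK0 : (0 : ℝ) ∉ K) (hνK : ν Kᶜ = 0)
    (φ : SchwartzMap ℝ ℂ) (hφ : ∀ y ∈ K, φ y = 1 / (y : ℂ)) :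
    ∃ C₀ : ℝ, 0 < C₀ ∧ ∀ a b N ξ : ℝ, 1 ≤ a → 0 ≤ b → 1 ≤ N →
      (‖∫ y, (∫ x in (0 : ℝ)..1,
          Complex.exp (((-2 * Real.pi * (ξ / N) * (a * N + b * N + x) * y : ℝ) : ℂ) *
            Complex.I)) ∂ν‖ ≤ C₀ * gfun ν (|ξ| / 2)) ∧
      (ξ ≠ 0 →
        ‖∫ y, (∫ x in (0 : ℝ)..1,
            Complex.exp (((-2 * Real.pi * (ξ / N) * (a * N + b * N + x) * y : ℝ) : ℂ) *
              Complex.I)) ∂ν‖ ≤ C₀ * gfun ν (|ξ| / 2) * (N / |ξ|)) := by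
  obtain ⟨C, hC, hF⟩ := exists_norm_ft1Weighted_le (ν := ν) φ
  refine ⟨1 + C, by positivity, fun a b N ξ ha hb hN => ?_⟩
  change ‖jIntegral ν (ξ / N) (a * N + b * N)‖ ≤ _ ∧
    (ξ ≠ 0 → ‖jIntegral ν (ξ / N) (a * N + b * N)‖ ≤ _)
  have hN0 : 0 < N := by linarith
  have hA : 0 ≤ a * N + b * N := by positivity
  have hξA : |ξ| ≤ |ξ / N| * (a * N + b * N) := by
    rw [abs_div, abs_of_pos hN0, div_mul_eq_mul_div, le_div_iff₀ hN0]
    exact mul_le_mul_of_nonneg_left (by nlinarith) (abs_nonneg ξ)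
  have hg : 0 ≤ gfun ν (|ξ| / 2) := gfun_nonneg (by positivity)
  refine ⟨?_, fun hξ => ?_⟩
  · calc _ ≤ gfun ν (|ξ| / 2) := norm_jIntegral_le hA (by positivity) (by linarith [abs_nonneg ξ])
      _ ≤ _ := le_mul_of_one_le_left hg (by linarith)
  · calc _ ≤ C * gfun ν (|ξ| / 2) / (π * |ξ / N|) :=
          norm_jIntegral_le_of_ne_zero hK0 hνK φ.integrable hφ hC hF
            (div_ne_zero hξ hN0.ne') hA (abs_nonneg ξ) hξA
      _ = C * gfun ν (|ξ| / 2) * (N / |ξ|) / π := by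
          rw [abs_div, abs_of_pos hN0]; field_simp
      _ ≤ C * gfun ν (|ξ| / 2) * (N / |ξ|) :=
          div_le_self (by positivity) (by linarith [pi_gt_three])
      _ ≤ _ := by gcongr; linarith

theorem stmt17 (ν : Measure ℝ) (hν0 : ν ≠ 0) [IsFiniteMeasure ν]
    (K : Set ℝ) (hKc : IsCompact K) (hK0 : (0 : ℝ) ∉ K) (hνK : ν Kᶜ = 0)
    (φ : SchwartzMap ℝ ℂ) (hφ : ∀ y ∈ K, φ y = 1 / (y : ℂ)) :
    ∃ C₀ : ℝ, 0 < C₀ ∧ ∀ a b N ξ : ℝ, 1 ≤ a → 0 ≤ b → 1 ≤ N →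
      (‖∫ y, (∫ x in (0 : ℝ)..1,
          Complex.exp (((-2 * Real.pi * (ξ / N) * (a * N + b * N + x) * y : ℝ) : ℂ) *
            Complex.I)) ∂ν‖ ≤ C₀ * gfun ν (|ξ| / 2)) ∧
      (ξ ≠ 0 →
        ‖∫ y, (∫ x in (0 : ℝ)..1,
            Complex.exp (((-2 * Real.pi * (ξ / N) * (a * N + b * N + x) * y : ℝ) : ℂ) *
              Complex.I)) ∂ν‖ ≤ C₀ * gfun ν (|ξ| / 2) * (N / |ξ|)) :=
  stmt17_general ν K hK0 hνK φ hφ
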